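/- Let N ≥ 1, 1 < p < ∞, and let Ω ⊂ ℝ^N be a bounded open set. Let g : ℝ^N → ℝ be measurable and Q-periodic with mean ḡ, and let M ≥ 0 satisfy |g(x) − ḡ| ≤ M for almost every x ∈ ℝ^N. Let c₁ > 0 be an L¹ Poincaré constant for Q, and let c_p > 0 satisfy the Poincaré inequality (∫_Ω |u|^p dx)^{1/p} ≤ c_p (∫_Ω |∇u|^p dx)^{1/p} for every u ∈ C¹_c(Ω). Then for every ε > 0 and every u ∈ C¹_c(Ω), |∫_Ω (g(x/ε) − ḡ) |u(x)|^p dx| ≤ p c₁ c_p^{p−1} M ε ∫_Ω |∇u|^p dx. -/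

import Mathlib

/-!
Write `v = |u|^p`. The substitution `x = ε y` turns the left-hand side into
`ε^N ∫ (g - ḡ) v(ε y) dy`, and differentiating `v(ε ·)` produces the factor `ε`; so it suffices
to treat `ε = 1`. Tile `ℝ^N` by the integer translates of `Q`. Periodicity pulls each tile back to
`Q`, where `g - ḡ` has mean zero and is bounded by `M`, so the integral of `(g - ḡ) W` over `Q`
is at most `M ∫_Q |W - W̄_Q| ≤ M c₁ ∫_Q |∇W|`; summing over the tiles gives
`|∫ (g - ḡ) v| ≤ M c₁ ∫ |∇v|`. Finally `|∇|u|^p| ≤ p |u|^{p-1} |∇u|`, and Hölder's inequality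
combined with the Poincaré inequality on `Ω` bounds `∫ |u|^{p-1} |∇u|` by `c_p^{p-1} ∫ |∇u|^p`.
-/

open MeasureTheory

def unitCube (N : ℕ) : Set (EuclideanSpace ℝ (Fin N)) :=
  {x | ∀ i, x i ∈ Set.Icc (0 : ℝ) 1}

open scoped Pointwise

theorem MeasureTheory.IsAddFundamentalDomain.hasSum_setIntegral_vadd {G α E : Type*}
    [AddGroup G] [AddAction G α] [MeasurableSpace α] [Countable G] [MeasurableConstVAdd G α]
    [NormedAddCommGroup E] [NormedSpace ℝ E] {μ : Measure α} [VAddInvariantMeasure G α μ]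
    {s : Set α} (h : IsAddFundamentalDomain G s μ) {f : α → E} (hf : Integrable f μ) :
    HasSum (fun γ : G => ∫ x in s, f (γ +ᵥ x) ∂μ) (∫ x, f x ∂μ) := by
  have hsum := hasSum_integral_measure (μ := fun γ : G => μ.restrict (γ +ᵥ s))
    (h.sum_restrict ▸ hf)
  rw [h.sum_restrict] at hsum
  convert hsum using 2 with γ
  exact ((measurePreserving_vadd γ μ).setIntegral_image_emb
    (measurableEmbedding_const_vadd γ) f s).symm

theorem abs_integral_mul_le_of_integral_eq_zero {α : Type*} [MeasurableSpace α]
    {μ : Measure α} [IsFiniteMeasure μ] {h W : α → ℝ} {M : ℝ}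
    (hh : AEStronglyMeasurable h μ) (hbd : ∀ᵐ x ∂μ, |h x| ≤ M) (hmean : ∫ x, h x ∂μ = 0)
    (hW : Integrable W μ) (c : ℝ) :
    |∫ x, h x * W x ∂μ| ≤ M * ∫ x, |W x - c| ∂μ := by
  have hWc : Integrable (fun x => W x - c) μ := hW.sub (integrable_const c)
  have hhi : Integrable h μ := (integrable_const M).mono' hh hbd
  have hprod : Integrable (fun x => h x * (W x - c)) μ := hWc.bdd_mul hh hbd
  have hcentre : ∫ x, h x * W x ∂μ = ∫ x, h x * (W x - c) ∂μ := by
    simp_rw [mul_sub]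
    rw [integral_sub (hW.bdd_mul hh hbd) (hhi.mul_const c), integral_mul_const, hmean, zero_mul,
      sub_zero]
  calc |∫ x, h x * W x ∂μ| = |∫ x, h x * (W x - c) ∂μ| := by rw [hcentre]
    _ ≤ ∫ x, |h x| * |W x - c| ∂μ := by
      simpa only [abs_mul] using abs_integral_le_integral_abs (f := fun x => h x * (W x - c))
    _ ≤ ∫ x, M * |W x - c| ∂μ := by
      refine integral_mono_ae (by simpa only [abs_mul] using hprod.abs)
        (hWc.abs.const_mul M) ?_
      filter_upwards [hbd] with x hx using mul_le_mul_of_nonneg_right hx (abs_nonneg _)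
    _ = M * ∫ x, |W x - c| ∂μ := integral_const_mul M _

theorem rpow_mul_rpow_le_of_rpow_le {X Y c p : ℝ} (hp : 1 ≤ p) (hX : 0 ≤ X) (hY : 0 ≤ Y)
    (hc : 0 ≤ c) (h : X ^ (1 / p) ≤ c * Y ^ (1 / p)) :
    X ^ ((p - 1) / p) * Y ^ (1 / p) ≤ c ^ (p - 1) * Y := by
  have hp0 : p ≠ 0 := (zero_lt_one.trans_le hp).ne'
  have hexp : (p - 1) / p + 1 / p = 1 := by rw [← add_div, sub_add_cancel, div_self hp0]
  have hsplit : ∀ Z : ℝ, 0 ≤ Z → Z ^ ((p - 1) / p) = (Z ^ (1 / p)) ^ (p - 1) := fun Z hZ => by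
    rw [← Real.rpow_mul hZ]; ring_nf
  calc X ^ ((p - 1) / p) * Y ^ (1 / p) ≤ (c * Y ^ (1 / p)) ^ (p - 1) * Y ^ (1 / p) := by
        rw [hsplit X hX]; gcongr
    _ = c ^ (p - 1) * Y := by
        rw [Real.mul_rpow hc (by positivity), mul_assoc, ← hsplit Y hY,
          ← Real.rpow_add' hY (by rw [hexp]; exact one_ne_zero), hexp, Real.rpow_one]

theorem integral_rpow_sub_one_mul_le {α : Type*} [MeasurableSpace α] {μ : Measure α}
    {p : ℝ} (hp : 1 < p) {f h : α → ℝ} (hf0 : ∀ x, 0 ≤ f x) (hh0 : ∀ x, 0 ≤ h x)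
    (hf : MemLp f (ENNReal.ofReal p) μ) (hh : MemLp h (ENNReal.ofReal p) μ) :
    ∫ x, f x ^ (p - 1) * h x ∂μ ≤
      (∫ x, f x ^ p ∂μ) ^ ((p - 1) / p) * (∫ x, h x ^ p ∂μ) ^ (1 / p) := by
  have hq : (p / (p - 1)).HolderConjugate p := (Real.HolderConjugate.conjExponent hp).symm
  have hfq : MemLp (fun x => f x ^ (p - 1)) (ENNReal.ofReal (p / (p - 1))) μ := by
    have := hf.norm_rpow_div (ENNReal.ofReal (p - 1))
    rw [ENNReal.toReal_ofReal (by linarith), ← ENNReal.ofReal_div_of_pos (by linarith)] at this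
    simpa only [Real.norm_of_nonneg (hf0 _)] using this
  have hexp : ∀ x, (f x ^ (p - 1)) ^ (p / (p - 1)) = f x ^ p := fun x => by
    rw [← Real.rpow_mul (hf0 x), mul_div_cancel₀ _ (sub_pos.2 hp).ne']
  simpa only [hexp, one_div_div] using integral_mul_le_Lp_mul_Lq_of_nonneg hq
    (.of_forall fun x => Real.rpow_nonneg (hf0 x) _) (.of_forall hh0) hfq hh

theorem integral_norm_fderiv_abs_rpow_le {E : Type*} [NormedAddCommGroup E] [NormedSpace ℝ E]
    [MeasurableSpace E] [OpensMeasurableSpace E] {μ : Measure E} [IsFiniteMeasureOnCompacts μ]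
    {p c : ℝ} (hp : 1 < p) (hc : 0 ≤ c) {u : E → ℝ} (hu : ContDiff ℝ 1 u)
    (hus : HasCompactSupport u)
    (hpoinc : (∫ x, |u x| ^ p ∂μ) ^ (1 / p) ≤ c * (∫ x, ‖fderiv ℝ u x‖ ^ p ∂μ) ^ (1 / p)) :
    ∫ x, ‖fderiv ℝ (fun x => |u x| ^ p) x‖ ∂μ ≤ p * c ^ (p - 1) * ∫ x, ‖fderiv ℝ u x‖ ^ p ∂μ := by
  have hDu := hu.continuous_fderiv one_ne_zero
  have hp1 : 0 < p - 1 := sub_pos.2 hp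
  have hprod : Integrable (fun x => |u x| ^ (p - 1) * ‖fderiv ℝ u x‖) μ := by
    refine (Continuous.mul ?_ hDu.norm).integrable_of_hasCompactSupport
      (hus.comp_left (g := fun t : ℝ => |t| ^ (p - 1)) (by simp [hp1.ne'])).mul_right
    exact continuous_abs.comp hu.continuous |>.rpow_const fun _ => Or.inr hp1.le
  have hchain : ∀ x,
      ‖fderiv ℝ (fun x => |u x| ^ p) x‖ ≤ p * (|u x| ^ (p - 1) * ‖fderiv ℝ u x‖) := fun x => by
    simpa only [Real.norm_eq_abs, mul_assoc] using
      norm_fderiv_norm_rpow_le (hu.differentiable one_ne_zero) (x := x) hp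
  calc ∫ x, ‖fderiv ℝ (fun x => |u x| ^ p) x‖ ∂μ
      ≤ ∫ x, p * (|u x| ^ (p - 1) * ‖fderiv ℝ u x‖) ∂μ :=
        integral_mono_of_nonneg (.of_forall fun _ => norm_nonneg _) (hprod.const_mul p)
          (.of_forall hchain)
    _ = p * ∫ x, |u x| ^ (p - 1) * ‖fderiv ℝ u x‖ ∂μ := integral_const_mul p _
    _ ≤ p * ((∫ x, |u x| ^ p ∂μ) ^ ((p - 1) / p) *
          (∫ x, ‖fderiv ℝ u x‖ ^ p ∂μ) ^ (1 / p)) := by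
        gcongr
        exact integral_rpow_sub_one_mul_le hp (fun x => abs_nonneg _) (fun x => norm_nonneg _)
          (hu.continuous.abs.memLp_of_hasCompactSupport hus.abs)
          (hDu.norm.memLp_of_hasCompactSupport (hus.fderiv ℝ).norm)
    _ ≤ p * (c ^ (p - 1) * ∫ x, ‖fderiv ℝ u x‖ ^ p ∂μ) :=
        mul_le_mul_of_nonneg_left (rpow_mul_rpow_le_of_rpow_le hp.le
          (integral_nonneg fun x => by positivity) (integral_nonneg fun x => by positivity) hc
          hpoinc) (by positivity)
    _ = p * c ^ (p - 1) * ∫ x, ‖fderiv ℝ u x‖ ^ p ∂μ := by ring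

section Periodic

variable {N : ℕ}

abbrev integerLattice (N : ℕ) : AddSubgroup (EuclideanSpace ℝ (Fin N)) :=
  (Submodule.span ℤ (Set.range (EuclideanSpace.basisFun (Fin N) ℝ).toBasis)).toAddSubgroup

instance : Countable (integerLattice N) :=
  inferInstanceAs <|
    Countable (Submodule.span ℤ (Set.range (EuclideanSpace.basisFun (Fin N) ℝ).toBasis))

def IsUnitCubePoincareConstant (N : ℕ) (c₁ : ℝ) : Prop :=
  ∀ w : EuclideanSpace ℝ (Fin N) → ℝ, ContDiff ℝ 1 w →
    ∫ x in unitCube N, |w x - ∫ y in unitCube N, w y| ≤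
      c₁ * ∫ x in unitCube N, ‖fderiv ℝ w x‖

def IsIntegerPeriodic (g : EuclideanSpace ℝ (Fin N) → ℝ) : Prop :=
  ∀ (x : EuclideanSpace ℝ (Fin N)) (z : Fin N → ℤ),
    g (x + (show EuclideanSpace ℝ (Fin N) from WithLp.toLp 2 (fun i => (z i : ℝ)))) = g x

theorem unitCube_eq_parallelepiped :
    unitCube N = parallelepiped (EuclideanSpace.basisFun (Fin N) ℝ).toBasis := by
  rw [parallelepiped_basis_eq]
  rfl

theorem volume_unitCube : volume (unitCube N) = 1 := by
  rw [unitCube_eq_parallelepiped, OrthonormalBasis.coe_toBasis,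
    OrthonormalBasis.volume_parallelepiped]

instance : IsFiniteMeasure (volume.restrict (unitCube N)) :=
  isFiniteMeasure_restrict.2 (by simp [volume_unitCube])

theorem restrict_fundamentalDomain_basisFun :
    volume.restrict (ZSpan.fundamentalDomain (EuclideanSpace.basisFun (Fin N) ℝ).toBasis) =
      volume.restrict (unitCube N) :=
  Measure.restrict_congr_set <| unitCube_eq_parallelepiped (N := N) ▸
    ZSpan.fundamentalDomain_ae_parallelepiped _ volume

theorem IsIntegerPeriodic.vadd_eq {g : EuclideanSpace ℝ (Fin N) → ℝ}
    (hg : IsIntegerPeriodic g) (γ : integerLattice N) (x : EuclideanSpace ℝ (Fin N)) :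
    g (γ +ᵥ x) = g x := by
  have hγ := ((EuclideanSpace.basisFun (Fin N) ℝ).toBasis.mem_span_iff_repr_mem ℤ γ).1 γ.2
  choose z hz using hγ
  convert hg x z using 2
  rw [AddSubgroup.vadd_def, vadd_eq_add, add_comm]
  congr 1
  ext i
  simpa using (hz i).symm

variable {g : EuclideanSpace ℝ (Fin N) → ℝ} {gbar M c₁ : ℝ}

theorem abs_setIntegral_unitCube_mul_le (hgm : Measurable g)
    (hgbar : gbar = ∫ y in unitCube N, g y) (hM : 0 ≤ M)
    (hbd : ∀ᵐ x : EuclideanSpace ℝ (Fin N), |g x - gbar| ≤ M)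
    (hpoinc : IsUnitCubePoincareConstant N c₁)
    {W : EuclideanSpace ℝ (Fin N) → ℝ} (hW : ContDiff ℝ 1 W) :
    |∫ y in unitCube N, (g y - gbar) * W y| ≤ M * c₁ * ∫ y in unitCube N, ‖fderiv ℝ W y‖ := by
  have hmean : ∫ y in unitCube N, (g y - gbar) = 0 := by
    have hg : Integrable g (volume.restrict (unitCube N)) := by
      simpa using ((integrable_const M).mono' (hgm.sub measurable_const).aestronglyMeasurable
        (ae_restrict_of_ae hbd)).add (integrable_const gbar)
    rw [integral_sub hg (integrable_const gbar), setIntegral_const, measureReal_def,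
      volume_unitCube, ← hgbar]
    simp
  have hWi : IntegrableOn W (unitCube N) :=
    hW.continuous.continuousOn.integrableOn_compact (by
      rw [unitCube_eq_parallelepiped]; exact (isCompact_Icc.image (by fun_prop)))
  calc |∫ y in unitCube N, (g y - gbar) * W y|
      ≤ M * ∫ y in unitCube N, |W y - ∫ z in unitCube N, W z| :=
        abs_integral_mul_le_of_integral_eq_zero (hgm.sub measurable_const).aestronglyMeasurable
          (ae_restrict_of_ae hbd) hmean hWi _
    _ ≤ M * (c₁ * ∫ y in unitCube N, ‖fderiv ℝ W y‖) := by gcongr; exact hpoinc W hW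
    _ = M * c₁ * ∫ y in unitCube N, ‖fderiv ℝ W y‖ := by ring

theorem abs_integral_mul_le_of_isIntegerPeriodic (hgm : Measurable g)
    (hper : IsIntegerPeriodic g) (hgbar : gbar = ∫ y in unitCube N, g y) (hM : 0 ≤ M)
    (hbd : ∀ᵐ x : EuclideanSpace ℝ (Fin N), |g x - gbar| ≤ M)
    (hpoinc : IsUnitCubePoincareConstant N c₁)
    {W : EuclideanSpace ℝ (Fin N) → ℝ} (hW : ContDiff ℝ 1 W) (hWs : HasCompactSupport W) :
    |∫ y, (g y - gbar) * W y| ≤ M * c₁ * ∫ y, ‖fderiv ℝ W y‖ := by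
  have hfd := ZSpan.isAddFundamentalDomain' (EuclideanSpace.basisFun (Fin N) ℝ).toBasis volume
  have hint : Integrable (fun y => (g y - gbar) * W y) :=
    (hW.continuous.integrable_of_hasCompactSupport hWs).bdd_mul
      (hgm.sub measurable_const).aestronglyMeasurable hbd
  have hDint : Integrable (fun y => ‖fderiv ℝ W y‖) :=
    ((hW.continuous_fderiv one_ne_zero).integrable_of_hasCompactSupport (hWs.fderiv ℝ)).norm
  have hsum := hfd.hasSum_setIntegral_vadd hint
  have hDsum := (hfd.hasSum_setIntegral_vadd hDint).mul_left (M * c₁)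
  simp only [restrict_fundamentalDomain_basisFun, hper.vadd_eq] at hsum hDsum
  have hcube : ∀ γ : integerLattice N,
      |∫ y in unitCube N, (g y - gbar) * W (γ +ᵥ y)| ≤
        M * c₁ * ∫ y in unitCube N, ‖fderiv ℝ W (γ +ᵥ y)‖ := fun γ => by
    simpa only [AddSubgroup.vadd_def, vadd_eq_add, fderiv_comp_add_left] using
      abs_setIntegral_unitCube_mul_le hgm hgbar hM hbd hpoinc (W := fun y => W (γ +ᵥ y))
        (hW.comp (contDiff_const.add contDiff_id))
  exact abs_le.2 ⟨hasSum_le (fun γ => (abs_le.1 (hcube γ)).1) hDsum.neg hsum,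
    hasSum_le (fun γ => (abs_le.1 (hcube γ)).2) hsum hDsum⟩

theorem abs_integral_comp_inv_smul_mul_le (hgm : Measurable g)
    (hper : IsIntegerPeriodic g) (hgbar : gbar = ∫ y in unitCube N, g y) (hM : 0 ≤ M)
    (hbd : ∀ᵐ x : EuclideanSpace ℝ (Fin N), |g x - gbar| ≤ M)
    (hpoinc : IsUnitCubePoincareConstant N c₁)
    {ε : ℝ} (hε : 0 < ε) {v : EuclideanSpace ℝ (Fin N) → ℝ} (hv : ContDiff ℝ 1 v)
    (hvs : HasCompactSupport v) :
    |∫ x, (g (ε⁻¹ • x) - gbar) * v x| ≤ M * c₁ * ε * ∫ x, ‖fderiv ℝ v x‖ := by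
  have hεN : 0 < ε ^ N := pow_pos hε N
  have hunit := abs_integral_mul_le_of_isIntegerPeriodic hgm hper hgbar hM hbd hpoinc
    (hv.comp (contDiff_const_smul ε)) (hvs.comp_smul hε.ne')
  have hlhs : ∫ x, (g (ε⁻¹ • x) - gbar) * v x = ε ^ N * ∫ y, (g y - gbar) * v (ε • y) := by
    have := Measure.integral_comp_inv_smul_of_nonneg volume
      (fun y => (g y - gbar) * v (ε • y)) hε.le
    simpa [smul_inv_smul₀ hε.ne', finrank_euclideanSpace_fin] using this
  have hrhs :
      ∫ y, ‖fderiv ℝ (fun y => v (ε • y)) y‖ = ε * (ε ^ N)⁻¹ * ∫ x, ‖fderiv ℝ v x‖ := by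
    have := Measure.integral_comp_smul volume (fun x => ‖fderiv ℝ v x‖) ε
    simp only [finrank_euclideanSpace_fin, abs_of_pos (inv_pos.2 hεN), smul_eq_mul] at this
    simp_rw [fderiv_comp_smul, norm_smul, Real.norm_of_nonneg hε.le, integral_const_mul, this,
      mul_assoc]
  calc |∫ x, (g (ε⁻¹ • x) - gbar) * v x| = ε ^ N * |∫ y, (g y - gbar) * v (ε • y)| := by
        rw [hlhs, abs_mul, abs_of_pos hεN]
    _ ≤ ε ^ N * (M * c₁ * (ε * (ε ^ N)⁻¹ * ∫ x, ‖fderiv ℝ v x‖)) := by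
        rw [← hrhs]; gcongr; exact hunit
    _ = M * c₁ * ε * ∫ x, ‖fderiv ℝ v x‖ := by field_simp

end Periodic

theorem averaging_estimate_gradient_form_general
    (N : ℕ) (p : ℝ) (hp : 1 < p)
    (Ω : Set (EuclideanSpace ℝ (Fin N)))
    (g : EuclideanSpace ℝ (Fin N) → ℝ) (hgm : Measurable g)
    (hper : ∀ (x : EuclideanSpace ℝ (Fin N)) (z : Fin N → ℤ),
      g (x + (show EuclideanSpace ℝ (Fin N) from WithLp.toLp 2 (fun i => (z i : ℝ)))) = g x)
    (gbar : ℝ) (hgbar : gbar = ∫ y in unitCube N, g y)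
    (M : ℝ) (hM : 0 ≤ M)
    (hbd : ∀ᵐ x : EuclideanSpace ℝ (Fin N), |g x - gbar| ≤ M)
    (c₁ : ℝ) (hc₁ : 0 < c₁)
    (hpoinc : ∀ w : EuclideanSpace ℝ (Fin N) → ℝ, ContDiff ℝ 1 w →
      ∫ x in unitCube N, |w x - ∫ y in unitCube N, w y| ≤
        c₁ * ∫ x in unitCube N, ‖fderiv ℝ w x‖)
    (cp : ℝ) (hcp : 0 < cp)
    (hpoincΩ : ∀ u : EuclideanSpace ℝ (Fin N) → ℝ,
      ContDiff ℝ 1 u → HasCompactSupport u → tsupport u ⊆ Ω →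
      (∫ x in Ω, |u x| ^ p) ^ (1 / p) ≤ cp * (∫ x in Ω, ‖fderiv ℝ u x‖ ^ p) ^ (1 / p)) :
    ∀ ε > (0 : ℝ), ∀ u : EuclideanSpace ℝ (Fin N) → ℝ,
      ContDiff ℝ 1 u → HasCompactSupport u → tsupport u ⊆ Ω →
      |∫ x in Ω, (g (ε⁻¹ • x) - gbar) * |u x| ^ p| ≤
        p * c₁ * cp ^ (p - 1) * M * ε * ∫ x in Ω, ‖fderiv ℝ u x‖ ^ p := by
  intro ε hε u hu hus huΩ
  set v := fun x => |u x| ^ p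
  have hv : ContDiff ℝ 1 v := by simpa only [Real.norm_eq_abs] using hu.norm_rpow hp
  have hv0 : |(0 : ℝ)| ^ p = 0 := by simp [(zero_lt_one.trans hp).ne']
  have hvs : HasCompactSupport v := hus.comp_left (g := fun t : ℝ => |t| ^ p) hv0
  have hvu : tsupport v ⊆ tsupport u := tsupport_comp_subset (g := fun t : ℝ => |t| ^ p) hv0 u
  have hvΩ : ∀ x ∉ Ω, x ∉ tsupport v := fun x hx hxv => hx (huΩ (hvu hxv))
  calc |∫ x in Ω, (g (ε⁻¹ • x) - gbar) * v x|
      = |∫ x, (g (ε⁻¹ • x) - gbar) * v x| := by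
        rw [setIntegral_eq_integral_of_forall_compl_eq_zero fun x hx => by
          rw [image_eq_zero_of_notMem_tsupport (hvΩ x hx), mul_zero]]
    _ ≤ M * c₁ * ε * ∫ x, ‖fderiv ℝ v x‖ :=
        abs_integral_comp_inv_smul_mul_le hgm hper hgbar hM hbd hpoinc hε hv hvs
    _ = M * c₁ * ε * ∫ x in Ω, ‖fderiv ℝ v x‖ := by
        rw [setIntegral_eq_integral_of_forall_compl_eq_zero fun x hx => by
          rw [fderiv_of_notMem_tsupport ℝ (hvΩ x hx), norm_zero]]
    _ ≤ M * c₁ * ε * (p * cp ^ (p - 1) * ∫ x in Ω, ‖fderiv ℝ u x‖ ^ p) := by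
        gcongr
        exact integral_norm_fderiv_abs_rpow_le hp hcp.le hu hus (hpoincΩ u hu hus huΩ)
    _ = p * c₁ * cp ^ (p - 1) * M * ε * ∫ x in Ω, ‖fderiv ℝ u x‖ ^ p := by ring

/-- Remark 3.2 of the paper: gradient-only form of the periodic averaging
estimate. With `c₁` an `L¹` Poincaré constant for `Q` and `c_p` a Poincaré constant for
`C¹_c(Ω)`, for every `ε > 0` and `u ∈ C¹_c(Ω)`:
`|∫_Ω (g(x/ε) − ḡ)|u|^p dx| ≤ p c₁ c_p^{p−1} M ε ∫_Ω |∇u|^p dx`. -/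
theorem averaging_estimate_gradient_form
    (N : ℕ) (hN : 1 ≤ N) (p : ℝ) (hp : 1 < p)
    (Ω : Set (EuclideanSpace ℝ (Fin N))) (hΩo : IsOpen Ω)
    (hΩb : Bornology.IsBounded Ω)
    (g : EuclideanSpace ℝ (Fin N) → ℝ) (hgm : Measurable g)
    (hper : ∀ (x : EuclideanSpace ℝ (Fin N)) (z : Fin N → ℤ),
      g (x + (show EuclideanSpace ℝ (Fin N) from WithLp.toLp 2 (fun i => (z i : ℝ)))) = g x)
    (gbar : ℝ) (hgbar : gbar = ∫ y in unitCube N, g y)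
    (M : ℝ) (hM : 0 ≤ M)
    (hbd : ∀ᵐ x : EuclideanSpace ℝ (Fin N), |g x - gbar| ≤ M)
    (c₁ : ℝ) (hc₁ : 0 < c₁)
    (hpoinc : ∀ w : EuclideanSpace ℝ (Fin N) → ℝ, ContDiff ℝ 1 w →
      ∫ x in unitCube N, |w x - ∫ y in unitCube N, w y| ≤
        c₁ * ∫ x in unitCube N, ‖fderiv ℝ w x‖)
    (cp : ℝ) (hcp : 0 < cp)
    (hpoincΩ : ∀ u : EuclideanSpace ℝ (Fin N) → ℝ,
      ContDiff ℝ 1 u → HasCompactSupport u → tsupport u ⊆ Ω →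
      (∫ x in Ω, |u x| ^ p) ^ (1 / p) ≤ cp * (∫ x in Ω, ‖fderiv ℝ u x‖ ^ p) ^ (1 / p)) :
    ∀ ε > (0 : ℝ), ∀ u : EuclideanSpace ℝ (Fin N) → ℝ,
      ContDiff ℝ 1 u → HasCompactSupport u → tsupport u ⊆ Ω →
      |∫ x in Ω, (g (ε⁻¹ • x) - gbar) * |u x| ^ p| ≤
        p * c₁ * cp ^ (p - 1) * M * ε * ∫ x in Ω, ‖fderiv ℝ u x‖ ^ p :=
  averaging_estimate_gradient_form_general N p hp Ω g hgm hper gbar hgbar M hM hbd c₁ hc₁ hpoinc cp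
    hcp hpoincΩ
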